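/- arXiv:1001.2878 — 2 statements merged into one kernel-verified Lean document; each statement's English description precedes it below -/
import Mathlib

section
/- Let α ∈ R \ Q and let φ ∈ C^ω(T,R) have average 0 and not be an analytic coboundary (i.e., there is no ψ ∈ C^ω(T,R) with φ(x) = ψ(x+α) − ψ(x)). Then the cocycle (α, R_φ) with A(x) = R_{φ(x)} ∈ SO(2,R) has fibered rotation number 0 but cannot be analytically conjugated to a cocycle of upper triangular matrices: there is no analytic B : T → SL(2,R) such that B(x+α) R_{φ(x)} B(x)^{-1} is upper triangular for all x. -/
/-- The rotation matrix by angle `θ` (real entries). -/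
noncomputable def RotR (θ : ℝ) : Matrix (Fin 2) (Fin 2) ℝ :=
  !![Real.cos θ, -Real.sin θ; Real.sin θ, Real.cos θ]

/-
The fibered rotation number is the uniform limit of the Birkhoff averages of `φ` along the
irrational rotation, which is the mean of `φ` (Weyl): the Birkhoff averages of a character
`e_n` with `n ≠ 0` are `O(1/N)` by summing a geometric series, and the continuous functions
whose averages converge uniformly to their mean form a closed subspace, hence contain
everything by density of trigonometric polynomials.

If `B(x + α) R_{φ(x)} B(x)⁻¹` is upper triangular, the second row of `B`, read as the complex
number `z = B₁₁ + B₁₀ i`, satisfies `e^{2πiφ(x)} z(x + α) = λ(x) z(x)` with `λ` real. Writing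
`z = e^L` with `L` analytic and `u = Im L`, the continuous function `2πφ + u(· + α) - u` takes
values in `πℤ`, so it is a constant `mπ`, while `u(x + 1) - u(x) = 2πd` for the winding number
`d` of `z`. Integrating over a period gives `mπ = 2πdα`; irrationality of `α` forces
`d = m = 0`, and then `ψ = -u / 2π` is an analytic periodic solution of `φ = ψ(· + α) - ψ`.
-/

open Filter Complex Topology
open scoped Real

section BirkhoffAverage

variable (𝕜 : Type*) [RCLike 𝕜] {α E : Type*} [NormedAddCommGroup E] [NormedSpace 𝕜 E]

theorem norm_birkhoffAverage (f : α → α) (g : α → E) (n : ℕ) (x : α) :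
    ‖birkhoffAverage 𝕜 f g n x‖ = ‖birkhoffSum f g n x‖ / n := by
  simp [birkhoffAverage, norm_smul, div_eq_inv_mul]

theorem dist_birkhoffAverage_le {f : α → α} {g g' : α → E} {C : ℝ}
    (h : ∀ x, dist (g x) (g' x) ≤ C) (n : ℕ) (x : α) :
    dist (birkhoffAverage 𝕜 f g n x) (birkhoffAverage 𝕜 f g' n x) ≤ C := by
  have hC : 0 ≤ C := dist_nonneg.trans (h x)
  rw [dist_eq_norm, ← Pi.sub_apply (birkhoffAverage 𝕜 f g n),
    ← Pi.sub_apply (birkhoffAverage 𝕜 f g), ← birkhoffAverage_sub, norm_birkhoffAverage]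
  refine div_le_of_le_mul₀ n.cast_nonneg hC ?_
  calc ‖birkhoffSum f (g - g') n x‖ ≤ ∑ k ∈ Finset.range n, ‖(g - g') (f^[k] x)‖ :=
        norm_sum_le _ _
    _ ≤ ∑ _k ∈ Finset.range n, C :=
        Finset.sum_le_sum fun k _ ↦ by simpa only [Pi.sub_apply, ← dist_eq_norm] using h _
    _ = C * n := by simp [mul_comm]

theorem tendstoUniformly_birkhoffAverage_of_approx {f : α → α} {g : α → E} {c : E}
    (h : ∀ ε > 0, ∃ g' : α → E, ∃ c' : E, (∀ x, dist (g x) (g' x) ≤ ε) ∧ dist c c' ≤ ε ∧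
      TendstoUniformly (birkhoffAverage 𝕜 f g') (fun _ ↦ c') atTop) :
    TendstoUniformly (birkhoffAverage 𝕜 f g) (fun _ ↦ c) atTop := by
  rw [Metric.tendstoUniformly_iff]
  intro ε hε
  obtain ⟨g', c', hg, hc, hlim⟩ := h (ε / 3) (by positivity)
  filter_upwards [Metric.tendstoUniformly_iff.mp hlim (ε / 3) (by positivity)] with n hn x
  have hgg' := dist_birkhoffAverage_le 𝕜 (f := f) (fun x ↦ (dist_comm _ _).trans_le (hg x)) n x
  calc dist c (birkhoffAverage 𝕜 f g n x)
      ≤ dist c c' + dist c' (birkhoffAverage 𝕜 f g' n x) +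
          dist (birkhoffAverage 𝕜 f g' n x) (birkhoffAverage 𝕜 f g n x) := dist_triangle4 ..
    _ < ε := by linarith [hn x]

end BirkhoffAverage

section AddCircle

open MeasureTheory AddCircle

variable {T : ℝ}

theorem fourier_add_nsmul (n : ℤ) (x a : AddCircle T) (k : ℕ) :
    fourier n (x + k • a) = fourier n x * fourier n a ^ k := by
  simp only [fourier_apply, smul_add, smul_comm n k a, AddCircle.toCircle_add,
    AddCircle.toCircle_nsmul, Circle.coe_mul, Circle.coe_pow]

variable [Fact (0 < T)] {a : AddCircle T}

theorem fourier_ne_one_of_addOrderOf_eq_zero (ha : addOrderOf a = 0) {n : ℤ} (hn : n ≠ 0) :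
    fourier n a ≠ 1 := by
  intro h
  rw [fourier_apply, ← Circle.coe_one, Circle.coe_inj, ← AddCircle.toCircle_zero,
    (AddCircle.injective_toCircle (Fact.out : 0 < T).ne').eq_iff] at h
  exact addOrderOf_eq_zero_iff.mp ha (isOfFinAddOrder_iff_zsmul_eq_zero.mpr ⟨n, hn, h⟩)

theorem norm_birkhoffSum_fourier_le (ha : addOrderOf a = 0) {n : ℤ} (hn : n ≠ 0) (N : ℕ)
    (x : AddCircle T) :
    ‖birkhoffSum (· + a) (fourier n) N x‖ ≤ 2 / ‖fourier n a - 1‖ := by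
  have hq := fourier_ne_one_of_addOrderOf_eq_zero ha hn
  have hsum : birkhoffSum (· + a) (fourier n) N x
      = fourier n x * ((fourier n a ^ N - 1) / (fourier n a - 1)) := by
    simp only [birkhoffSum, add_right_iterate_apply, fourier_add_nsmul, ← Finset.mul_sum,
      geom_sum_eq hq]
  have hnorm : ∀ y : AddCircle T, ‖fourier n y‖ = 1 := fun y ↦ by
    rw [fourier_apply, Circle.norm_coe]
  rw [hsum, norm_mul, hnorm, one_mul, norm_div]
  gcongr
  calc ‖fourier n a ^ N - 1‖ ≤ ‖fourier n a ^ N‖ + ‖(1 : ℂ)‖ := norm_sub_le _ _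
    _ = 2 := by rw [norm_pow, hnorm, one_pow, norm_one]; norm_num

theorem tendstoUniformly_birkhoffAverage_fourier (ha : addOrderOf a = 0) (n : ℤ) :
    TendstoUniformly (birkhoffAverage ℂ (· + a) (fourier n))
      (fun _ ↦ fourierCoeff (fourier (T := T) n) 0) atTop := by
  rw [fourierCoeff_fourier, Metric.tendstoUniformly_iff]
  intro ε hε
  rcases eq_or_ne n 0 with rfl | hn
  · filter_upwards [eventually_ne_atTop 0] with N hN x
    have hconst : ⇑(fourier (T := T) 0) ∘ (· + a) = fourier 0 := by
      ext; simp
    simpa [birkhoffAverage_of_comp_eq ℂ hconst (Nat.cast_ne_zero.mpr hN), fourier_zero] using hε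
  · have hC := tendsto_const_div_atTop_nhds_zero_nat (2 / ‖fourier n a - 1‖)
    filter_upwards [hC.eventually (gt_mem_nhds hε)] with N hN x
    rw [Pi.single_eq_of_ne hn.symm, dist_zero_left, norm_birkhoffAverage]
    exact (div_le_div_of_nonneg_right (norm_birkhoffSum_fourier_le ha hn N x)
      N.cast_nonneg).trans_lt hN

theorem dist_fourierCoeff_le (g g' : C(AddCircle T, ℂ)) (n : ℤ) :
    dist (fourierCoeff g n) (fourierCoeff g' n) ≤ dist g g' := by
  have hint : ∀ h : C(AddCircle T, ℂ), Integrable (fun t ↦ fourier (-n) t • h t) haarAddCircle :=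
    fun h ↦ (Continuous.integrable_of_hasCompactSupport (by fun_prop)
      (HasCompactSupport.of_compactSpace _))
  rw [dist_eq_norm, fourierCoeff, fourierCoeff, ← integral_sub (hint g) (hint g')]
  refine (norm_integral_le_of_norm_le_const (C := dist g g')
    (Eventually.of_forall fun t ↦ ?_)).trans_eq (by simp)
  rw [← smul_sub, norm_smul, fourier_apply, Circle.norm_coe, one_mul, ← dist_eq_norm]
  exact ContinuousMap.dist_apply_le_dist t

-- `fourierCoeff g 0` is the mean of `g`.
def uniformlyErgodicSubmodule (a : AddCircle T) : Submodule ℂ C(AddCircle T, ℂ) where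
  carrier := {g | TendstoUniformly (birkhoffAverage ℂ (· + a) g) (fun _ ↦ fourierCoeff g 0) atTop}
  zero_mem' := by
    refine Metric.tendstoUniformly_iff.mpr fun ε hε ↦ Eventually.of_forall fun n x ↦ ?_
    simpa [birkhoffAverage, birkhoffSum, fourierCoeff] using hε
  add_mem' := by
    intro g g' hg hg'
    have hint : ∀ h : C(AddCircle T, ℂ), Integrable h haarAddCircle := fun h ↦
      h.continuous.integrable_of_hasCompactSupport (HasCompactSupport.of_compactSpace _)
    simp only [Set.mem_ofPred_eq, ContinuousMap.coe_add, birkhoffAverage_add,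
      fourierCoeff.add (hint g) (hint g')]
    exact hg.add hg'
  smul_mem' := by
    intro c g hg
    have h : birkhoffAverage ℂ (· + a) ⇑(c • g) = c • birkhoffAverage ℂ (· + a) g := by
      ext; simp [birkhoffAverage, birkhoffSum, ← Finset.mul_sum]; ring
    simp only [Set.mem_ofPred_eq] at hg ⊢
    rw [h, ContinuousMap.coe_smul, fourierCoeff.const_smul]
    exact (uniformContinuous_const_smul c).comp_tendstoUniformly hg

theorem isClosed_uniformlyErgodicSubmodule (a : AddCircle T) :
    IsClosed (uniformlyErgodicSubmodule a : Set C(AddCircle T, ℂ)) := by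
  refine isClosed_of_closure_subset fun g hg ↦
    tendstoUniformly_birkhoffAverage_of_approx ℂ fun ε hε ↦ ?_
  obtain ⟨g', hg', hdist⟩ := Metric.mem_closure_iff.mp hg ε hε
  exact ⟨g', _, fun x ↦ (ContinuousMap.dist_apply_le_dist x).trans hdist.le,
    (dist_fourierCoeff_le g g' 0).trans hdist.le, hg'⟩

theorem tendstoUniformly_birkhoffAverage_addCircle {a : AddCircle T} (ha : addOrderOf a = 0)
    (g : C(AddCircle T, ℂ)) :
    TendstoUniformly (birkhoffAverage ℂ (· + a) g) (fun _ ↦ fourierCoeff g 0) atTop := by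
  have hspan : Submodule.span ℂ (Set.range fourier) ≤ uniformlyErgodicSubmodule a :=
    Submodule.span_le.mpr (Set.range_subset_iff.mpr (tendstoUniformly_birkhoffAverage_fourier ha))
  have hclosure := Submodule.topologicalClosure_minimal _ hspan
    (isClosed_uniformlyErgodicSubmodule a)
  rw [span_fourier_closure_eq_top, top_le_iff] at hclosure
  have hg : g ∈ uniformlyErgodicSubmodule a := hclosure ▸ Submodule.mem_top
  exact hg

end AddCircle

theorem tendstoUniformly_average_of_periodic {α : ℝ} (hα : Irrational α) {φ : ℝ → ℝ}
    (hφ : Continuous φ) (hper : Function.Periodic φ 1) :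
    TendstoUniformly (fun (n : ℕ) (θ : ℝ) ↦ (1 / n : ℝ) * ∑ k ∈ Finset.range n, φ (θ + k * α))
      (fun _ ↦ ∫ x in (0 : ℝ)..1, φ x) atTop := by
  have hperℂ : Function.Periodic (fun x ↦ (φ x : ℂ)) 1 := fun x ↦ by simp [hper x]
  let F : C(AddCircle (1 : ℝ), ℂ) :=
    ⟨hperℂ.lift, continuous_coinduced_dom.mpr (continuous_ofReal.comp hφ)⟩
  have hF : ∀ x : ℝ, F x = φ x := hperℂ.lift_coe
  have ha : addOrderOf (α : AddCircle (1 : ℝ)) = 0 :=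
    AddCircle.denseRange_zsmul_iff.mp (AddCircle.denseRange_zsmul_coe_iff.mpr (by simpa using hα))
  have hmean : fourierCoeff F 0 = ((∫ x in (0 : ℝ)..1, φ x : ℝ) : ℂ) := by
    simp [fourierCoeff_eq_intervalIntegral F 0 0, hF, intervalIntegral.integral_ofReal]
  have havg : ∀ (n : ℕ) (θ : ℝ), birkhoffAverage ℂ (· + (α : AddCircle (1 : ℝ))) F n θ
      = (((1 / n : ℝ) * ∑ k ∈ Finset.range n, φ (θ + k * α) : ℝ) : ℂ) := by
    intro n θ
    simp only [birkhoffAverage, birkhoffSum, add_right_iterate_apply, ← AddCircle.coe_nsmul,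
      ← AddCircle.coe_add, hF, nsmul_eq_mul]
    push_cast
    ring
  have h := (tendstoUniformly_birkhoffAverage_addCircle ha F).comp ((↑) : ℝ → AddCircle (1 : ℝ))
  rw [Metric.tendstoUniformly_iff] at h ⊢
  intro ε hε
  filter_upwards [h ε hε] with n hn θ
  have hθ := hn θ
  simp only [Function.comp_apply] at hθ
  rwa [havg, hmean, Complex.isometry_ofReal.dist_eq] at hθ

def lowerRow (B : Matrix (Fin 2) (Fin 2) ℝ) : ℂ := B 1 1 + B 1 0 * I

theorem lowerRow_mul_rotR (B : Matrix (Fin 2) (Fin 2) ℝ) (θ : ℝ) :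
    lowerRow (B * RotR θ) = exp (θ * I) * lowerRow B := by
  apply Complex.ext <;>
    simp [lowerRow, RotR, Matrix.mul_apply, Fin.sum_univ_two, exp_ofReal_mul_I_re,
      exp_ofReal_mul_I_im, -ofReal_cos, -ofReal_sin] <;> ring

theorem lowerRow_mul_of_apply_one_zero_eq_zero {M : Matrix (Fin 2) (Fin 2) ℝ} (hM : M 1 0 = 0)
    (B : Matrix (Fin 2) (Fin 2) ℝ) : lowerRow (M * B) = M 1 1 * lowerRow B := by
  simp [lowerRow, Matrix.mul_apply, Fin.sum_univ_two, hM]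
  ring

theorem lowerRow_ne_zero {B : Matrix (Fin 2) (Fin 2) ℝ} (hB : B.det ≠ 0) : lowerRow B ≠ 0 := by
  intro h
  have h11 : B 1 1 = 0 := by simpa [lowerRow] using congrArg re h
  have h10 : B 1 0 = 0 := by simpa [lowerRow] using congrArg im h
  simp [Matrix.det_fin_two, h11, h10] at hB

theorem exp_mul_I_mul_lowerRow {B B' : Matrix (Fin 2) (Fin 2) ℝ} (hB : B.det ≠ 0) {θ : ℝ}
    (h : (B' * RotR θ * B⁻¹) 1 0 = 0) :
    exp (θ * I) * lowerRow B' = (B' * RotR θ * B⁻¹) 1 1 * lowerRow B := by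
  rw [← lowerRow_mul_rotR, ← lowerRow_mul_of_apply_one_zero_eq_zero h,
    Matrix.nonsing_inv_mul_cancel_right _ _ hB.isUnit]

section Logarithm

variable {E : Type*} [NormedAddCommGroup E] [NormedSpace ℝ E]

theorem analyticAt_of_exp_eq {f L : E → ℂ} {x : E} (hf : AnalyticAt ℝ f x)
    (hL : ContinuousAt L x) (hexp : ∀ y, exp (L y) = f y) : AnalyticAt ℝ L x := by
  have hfx : f x ≠ 0 := hexp x ▸ exp_ne_zero _
  have hlog : AnalyticAt ℝ (fun y ↦ L x + log (f y / f x)) x := by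
    refine analyticAt_const.add ?_
    have h1 : AnalyticAt ℂ log (f x / f x) := by
      rw [div_self hfx]; exact analyticAt_clog one_mem_slitPlane
    exact h1.restrictScalars.comp (f := fun y ↦ f y / f x) (hf.div analyticAt_const hfx)
  refine hlog.congr ?_
  -- near `x`, `L` stays within `π` of `L x`, where `log` inverts `exp`
  have hnear : ∀ᶠ y in 𝓝 x, ‖L y - L x‖ < π :=
    (hL.sub continuousAt_const).norm.eventually_lt continuousAt_const (by simpa using Real.pi_pos)
  filter_upwards [hnear] with y hy
  have him : |(L y - L x).im| < π := (abs_im_le_norm _).trans_lt hy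
  rw [← hexp, ← hexp, ← exp_sub, log_exp (by linarith [neg_abs_le (L y - L x).im])
    (by linarith [le_abs_self (L y - L x).im])]
  ring

theorem exists_analytic_exp_eq {f : E → ℂ} (hf : ∀ x, AnalyticAt ℝ f x) (hne : ∀ x, f x ≠ 0) :
    ∃ L : E → ℂ, (∀ x, AnalyticAt ℝ L x) ∧ ∀ x, exp (L x) = f x := by
  obtain ⟨L, ⟨-, hL⟩, -⟩ := isCoveringMapOn_exp.existsUnique_continuousMap_lifts
    ⟨f, continuous_iff_continuousAt.mpr fun x ↦ (hf x).continuousAt⟩ (a₀ := 0)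
    (exp_log (hne 0)) hne
  have hexp : ∀ x, exp (L x) = f x := fun x ↦ congrFun hL x
  exact ⟨L, fun x ↦ analyticAt_of_exp_eq (hf x) L.continuous.continuousAt hexp, hexp⟩

end Logarithm

theorem exists_int_forall_eq_int_mul {X : Type*} [TopologicalSpace X] [ConnectedSpace X]
    {f : X → ℝ} (hf : Continuous f) {c : ℝ} (hc : c ≠ 0) (h : ∀ x, ∃ n : ℤ, f x = n * c) :
    ∃ n : ℤ, ∀ x, f x = n * c := by
  choose m hm using h
  have hm_cont : Continuous m := by
    rw [Int.isClosedEmbedding_coe_real.isInducing.continuous_iff]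
    convert hf.div_const c using 1
    ext x
    simp [hm x, hc]
  obtain ⟨x₀⟩ := ‹ConnectedSpace X›.toNonempty
  exact ⟨m x₀, fun x ↦ by rw [hm x, PreconnectedSpace.constant inferInstance hm_cont]⟩

theorem integral_comp_add_sub_of_add_one {u : ℝ → ℝ} (hu : Continuous u) {c : ℝ}
    (h : ∀ x, u (x + 1) = u x + c) (α : ℝ) :
    ∫ x in (0 : ℝ)..1, (u (x + α) - u x) = c * α := by
  set v : ℝ → ℝ := fun x ↦ u x - c * x
  have hv : Function.Periodic v 1 := fun x ↦ by simp only [v, h]; ring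
  have hv_cont : Continuous v := by fun_prop
  have hshift : ∫ x in (0 : ℝ)..1, v (x + α) = ∫ x in (0 : ℝ)..1, v x := by
    rw [intervalIntegral.integral_comp_add_right, zero_add, add_comm]
    simpa using hv.intervalIntegral_add_eq α 0
  calc ∫ x in (0 : ℝ)..1, (u (x + α) - u x)
      = ∫ x in (0 : ℝ)..1, ((v (x + α) - v x) + c * α) := by
        congr 1; ext x; simp only [v]; ring
    _ = c * α := by
        have hvα : Continuous fun x ↦ v (x + α) := by fun_prop
        rw [intervalIntegral.integral_add (f := fun x ↦ v (x + α) - v x)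
          ((hvα.sub hv_cont).intervalIntegrable _ _)
          intervalIntegrable_const, intervalIntegral.integral_sub
          (hvα.intervalIntegrable _ _) (hv_cont.intervalIntegrable _ _), hshift]
        simp

theorem exists_int_im_sub_eq_of_exp_eq {a b : ℂ} (h : exp a = exp b) :
    ∃ n : ℤ, a.im - b.im = n * (2 * π) := by
  obtain ⟨n, rfl⟩ := exp_eq_exp_iff_exists_int.mp h
  exact ⟨n, by simp⟩

theorem exists_int_im_eq_of_exp_im_eq_zero {a : ℂ} (h : (exp a).im = 0) :
    ∃ n : ℤ, a.im = n * π := by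
  rw [exp_im, mul_eq_zero, or_iff_right (Real.exp_pos _).ne', Real.sin_eq_zero_iff] at h
  obtain ⟨n, hn⟩ := h
  exact ⟨n, hn.symm⟩

theorem exists_int_add_im_sub_eq_of_lowerRow {B B' : Matrix (Fin 2) (Fin 2) ℝ} (hB : B.det ≠ 0)
    {θ : ℝ} (h : (B' * RotR θ * B⁻¹) 1 0 = 0) {l l' : ℂ} (hl : exp l = lowerRow B)
    (hl' : exp l' = lowerRow B') : ∃ n : ℤ, θ + (l'.im - l.im) = n * π := by
  have hreal : exp (θ * I + l' - l) = ((B' * RotR θ * B⁻¹) 1 1 : ℝ) := by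
    rw [exp_sub, exp_add, hl, hl', exp_mul_I_mul_lowerRow hB h,
      mul_div_cancel_right₀ _ (lowerRow_ne_zero hB)]
  obtain ⟨n, hn⟩ := exists_int_im_eq_of_exp_im_eq_zero (by rw [hreal]; exact ofReal_im _)
  exact ⟨n, by simpa [add_sub_assoc] using hn⟩

theorem Irrational.eq_zero_of_intCast_eq_mul {α : ℝ} (hα : Irrational α) {m n : ℤ}
    (h : (m : ℝ) = n * α) : m = 0 ∧ n = 0 := by
  have hn : n = 0 := by
    by_contra hn
    exact (hα.intCast_mul hn).ne_int m h.symm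
  exact ⟨by simpa [hn] using h, hn⟩

theorem exists_coboundary_of_upperTriangular_conj {α : ℝ} (hα : Irrational α) {φ : ℝ → ℝ}
    (hφ : Continuous φ) (havg : ∫ x in (0 : ℝ)..1, φ x = 0)
    {B : ℝ → Matrix (Fin 2) (Fin 2) ℝ} (hBa : ∀ x i j, AnalyticAt ℝ (fun y ↦ B y i j) x)
    (hBper : ∀ x, B (x + 1) = B x) (hBdet : ∀ x, (B x).det ≠ 0)
    (htri : ∀ x, (B (x + α) * RotR (2 * π * φ x) * (B x)⁻¹) 1 0 = 0) :
    ∃ ψ : ℝ → ℝ, (∀ x, AnalyticAt ℝ ψ x) ∧ (∀ x, ψ (x + 1) = ψ x) ∧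
      ∀ x, φ x = ψ (x + α) - ψ x := by
  have hz : ∀ x, AnalyticAt ℝ (fun y ↦ lowerRow (B y)) x := fun x ↦
    ((ofRealCLM.analyticAt _).comp (hBa x 1 1)).add
      (((ofRealCLM.analyticAt _).comp (hBa x 1 0)).mul analyticAt_const)
  obtain ⟨L, hLa, hLexp⟩ := exists_analytic_exp_eq hz fun x ↦ lowerRow_ne_zero (hBdet x)
  set u : ℝ → ℝ := fun x ↦ (L x).im
  have hu_cont : Continuous u :=
    continuous_im.comp (continuous_iff_continuousAt.mpr fun x ↦ (hLa x).continuousAt)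
  obtain ⟨d, hd⟩ := exists_int_forall_eq_int_mul (f := fun x ↦ u (x + 1) - u x) (by fun_prop)
    Real.two_pi_pos.ne' fun x ↦ exists_int_im_sub_eq_of_exp_eq (by rw [hLexp, hLexp, hBper])
  obtain ⟨m, hm⟩ := exists_int_forall_eq_int_mul (f := fun x ↦ 2 * π * φ x + (u (x + α) - u x))
    (by fun_prop) Real.pi_ne_zero fun x ↦
      exists_int_add_im_sub_eq_of_lowerRow (hBdet x) (htri x) (hLexp x) (hLexp (x + α))
  have hu_int := integral_comp_add_sub_of_add_one hu_cont (c := d * (2 * π))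
    (fun x ↦ by linarith [hd x]) α
  have hmd : (m : ℝ) * π = d * (2 * π) * α := by
    calc (m : ℝ) * π = ∫ x in (0 : ℝ)..1, (2 * π * φ x + (u (x + α) - u x)) := by simp [hm]
      _ = 2 * π * (∫ x in (0 : ℝ)..1, φ x) + ∫ x in (0 : ℝ)..1, (u (x + α) - u x) := by
        have hφ' : Continuous fun x ↦ 2 * π * φ x := by fun_prop
        have hu' : Continuous fun x ↦ u (x + α) - u x := by fun_prop
        rw [intervalIntegral.integral_add (hφ'.intervalIntegrable _ _) (hu'.intervalIntegrable _ _),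
          intervalIntegral.integral_const_mul]
      _ = d * (2 * π) * α := by rw [havg, hu_int]; ring
  obtain ⟨hm0, hd0⟩ := hα.eq_zero_of_intCast_eq_mul (m := m) (n := 2 * d)
    (mul_right_cancel₀ Real.pi_ne_zero (by push_cast; linarith))
  replace hd0 : d = 0 := by omega
  refine ⟨fun x ↦ -u x / (2 * π), fun x ↦ ?_, fun x ↦ ?_, fun x ↦ ?_⟩
  · exact ((imCLM.analyticAt _).comp (hLa x)).neg.div_const
  · have hu_per := hd x
    simp only [hd0, Int.cast_zero, zero_mul, sub_eq_zero] at hu_per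
    simp only [hu_per]
  · have hphase := hm x
    simp only [hm0, Int.cast_zero, zero_mul] at hphase
    field_simp
    linarith

/-- If `φ` is real-analytic on `𝕋`, has average `0` and is not an analytic
coboundary over the rotation by irrational `α`, then the cocycle
`(α, R_φ)` (rotation by angle `2πφ`) has fibered rotation number `0`
(its Birkhoff averages converge uniformly to `0`) but cannot be analytically
conjugated to upper triangular form. -/
theorem stmt17 (α : ℝ) (hα : Irrational α) (φ : ℝ → ℝ)
    (hφa : ∀ x, AnalyticAt ℝ φ x) (hper : ∀ x, φ (x + 1) = φ x)
    (havg : (∫ x in (0:ℝ)..1, φ x) = 0)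
    (hcob : ¬ ∃ ψ : ℝ → ℝ, (∀ x, AnalyticAt ℝ ψ x) ∧ (∀ x, ψ (x + 1) = ψ x) ∧
      ∀ x, φ x = ψ (x + α) - ψ x) :
    TendstoUniformly
      (fun (n : ℕ) (θ : ℝ) => (1 / n : ℝ) * ∑ k ∈ Finset.range n, φ (θ + k * α))
      (fun _ => 0) Filter.atTop ∧
    ¬ ∃ B : ℝ → Matrix (Fin 2) (Fin 2) ℝ,
      (∀ (x : ℝ) (i j : Fin 2), AnalyticAt ℝ (fun y => B y i j) x) ∧
      (∀ x, B (x + 1) = B x) ∧ (∀ x, (B x).det = 1) ∧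
      ∀ x, (B (x + α) * RotR (2 * Real.pi * φ x) * (B x)⁻¹) 1 0 = 0 := by
  have hφ : Continuous φ := continuous_iff_continuousAt.mpr fun x ↦ (hφa x).continuousAt
  refine ⟨havg ▸ tendstoUniformly_average_of_periodic hα hφ hper, ?_⟩
  rintro ⟨B, hBa, hBper, hBdet, htri⟩
  exact hcob (exists_coboundary_of_upperTriangular_conj hα hφ havg hBa hBper
    (fun x ↦ by simp [hBdet x]) htri)
end

section
/- Let ρ > 0, and suppose φ : T → R is continuous with inf_{x∈T} ‖R_{2φ(x)} − Id‖ ≥ ρ (operator norm). Then for any α ∈ R, inf_{x∈T} ‖R_{φ(x+α)+φ(x)} − Id‖ ≥ ρ; i.e., the lower bound on the distance of the doubled rotation angle from the identity persists for the symmetrized sum, because inf_x ‖R_{φ(x+α)+φ(x)} − Id‖ ≥ inf_x ‖R_{2φ(x)} − Id‖ by the intermediate value theorem applied to the continuous function x ↦ φ(x+α)+φ(x) on the compact connected space T. -/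
open scoped Matrix.Norms.L2Operator

/-- The range of a continuous real function on a preconnected space is an interval, so it
contains the midpoint of any two of its values. -/
theorem Continuous.exists_two_mul_eq_add {X : Type*} [TopologicalSpace X] [PreconnectedSpace X]
    {f : X → ℝ} (hf : Continuous f) (x y : X) : ∃ z, 2 * f z = f x + f y := by
  have hmid : (f x + f y) / 2 ∈ Set.uIcc (f x) (f y) := by
    rcases le_total (f x) (f y) with h | h
    · rw [Set.uIcc_of_le h]; constructor <;> linarith
    · rw [Set.uIcc_of_ge h]; constructor <;> linarith
  obtain ⟨z, hz⟩ := (isPreconnected_range hf).ordConnected.uIcc_subset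
    (Set.mem_range_self x) (Set.mem_range_self y) hmid
  exact ⟨z, by rw [hz]; ring⟩

theorem stmt19_general (ρ : ℝ) (φ : ℝ → ℝ)
    (hcont : Continuous φ)
    (hlow : ∀ x, ρ ≤ ‖RotR (2 * φ x) - 1‖) :
    ∀ α x : ℝ, ρ ≤ ‖RotR (φ (x + α) + φ x) - 1‖ := by
  intro α x
  obtain ⟨z, hz⟩ := hcont.exists_two_mul_eq_add (x + α) x
  exact hz ▸ hlow z

/-- If `‖R_{2φ(x)} − Id‖ ≥ ρ` for all `x` and `φ` is continuous and
`1`-periodic, then `‖R_{φ(x+α)+φ(x)} − Id‖ ≥ ρ` for all `α` and `x`. -/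
theorem stmt19 (ρ : ℝ) (hρ : 0 < ρ) (φ : ℝ → ℝ)
    (hcont : Continuous φ) (hper : ∀ x, φ (x + 1) = φ x)
    (hlow : ∀ x, ρ ≤ ‖RotR (2 * φ x) - 1‖) :
    ∀ α x : ℝ, ρ ≤ ‖RotR (φ (x + α) + φ x) - 1‖ :=
  stmt19_general ρ φ hcont hlow
end
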